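/- Let I = B(z, r) with z ∈ K and 0 < r < 1, and let L ≥ L₀(I) be a positive integer with 3^{-L₀(I)}/2 < r/5. Then μ(I) ≍ |C_L ∩ I| / 2^L, with absolute implied constants. Moreover, for any ball B = B(z, r) with z ∈ ℝ, 0 < r < 1, and any positive integer L with 3^{1−L} < r, one has μ(B) ≤ 2^{-(L-1)} |C_L ∩ 5B|, where 5B is the ball with the same centre and radius 5r. -/

import Mathlib

open MeasureTheory Metric

/-- γ = log 2 / log 3. -/
noncomputable def cantorDim : ℝ := Real.log 2 / Real.log 3

/-- The natural measure on the middle-third Cantor set. -/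
noncomputable def cantorMeasure : Measure ℝ :=
  (μH[cantorDim] : Measure ℝ).restrict cantorSet

/-- `C_L`: endpoints of the level-`L` Cantor intervals. -/
def cantorEndpoints (L : ℕ) : Set ℝ :=
  {x | (∃ b : ℕ, b ≤ 3 ^ L ∧ x = (b : ℝ) / 3 ^ L) ∧ x ∈ cantorSet}

/-!
The Cantor set `K` is the image of the coin-tossing space `ℕ → Bool` under
`a ↦ ∑ 2 aᵢ 3^{-(i+1)}`, and `C_L` is `3^{-L}`-separated, so enlarging a ball by `3^{-L}` adds
at most two points of `C_L`.

Upper bound: every point of `K ∩ B(z, r)` lies in a copy `e + 3^{-L} K` with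
`e ∈ C_L ∩ B(z, r + 3^{-L})`, and `μH^γ(K) ≤ 1` (cover `K` by its `2^M` intervals of level
`M`), so `μ(B(z, r)) ≤ 2^{-L} |C_L ∩ B(z, r + 3^{-L})|`.

Lower bound: points of `K` whose first `n` digits differ are at least `3^{-n}` apart, so the image
`ν` of the fair coin-tossing measure gives mass at most `2^{-n}` to sets of diameter `< 3^{-n}`.
The mass distribution principle then gives `ν ≤ 2 μ`, hence every ball of radius `3^{-L}/2`
centred in `K` has `μ`-mass at least `2^{-(L+2)}`; around the points of `C_L` these balls are
disjoint.
-/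

open Set Filter ProbabilityTheory
open scoped ENNReal

noncomputable def cantorMap (a : ℕ → Bool) : ℝ :=
  Real.ofDigits fun i ↦ cond (a i) (2 : Fin 3) 0

noncomputable def cantorIntervalLeft {n : ℕ} (v : Fin n → Bool) : ℝ :=
  ∑ i : Fin n, cond (v i) 2 0 / 3 ^ ((i : ℕ) + 1)

lemma cantorMap_mem_cantorSet (a : ℕ → Bool) : cantorMap a ∈ cantorSet :=
  ofDigits_bool_to_fin_three_mem_cantorSet a

lemma exists_cantorMap_eq {x : ℝ} (hx : x ∈ cantorSet) : ∃ a, cantorMap a = x :=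
  ⟨cantorSetEquivNatToBool ⟨x, hx⟩,
    congrArg Subtype.val (cantorSetEquivNatToBool.symm_apply_apply ⟨x, hx⟩)⟩

lemma range_cantorMap : range cantorMap = cantorSet :=
  Subset.antisymm (range_subset_iff.mpr cantorMap_mem_cantorSet) fun _ hx ↦ exists_cantorMap_eq hx

lemma continuous_cantorMap : Continuous cantorMap :=
  Real.continuous_ofDigits.comp <| continuous_pi fun i ↦
    (continuous_of_discreteTopology (f := fun b : Bool ↦ cond b (2 : Fin 3) 0)).comp
      (continuous_apply i)

lemma cantorMap_nonneg (a : ℕ → Bool) : 0 ≤ cantorMap a := Real.ofDigits_nonneg _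

lemma cantorMap_le_one (a : ℕ → Bool) : cantorMap a ≤ 1 := Real.ofDigits_le_one _

lemma cantorMap_const (t : Bool) : cantorMap (fun _ ↦ t) = cond t 1 0 := by
  cases t
  · simp [cantorMap, Real.ofDigits, Real.ofDigitsTerm]
  · exact Real.ofDigits_const_last_eq_one 2

lemma cantorMap_eq_cantorIntervalLeft_add (a : ℕ → Bool) (n : ℕ) :
    cantorMap a = cantorIntervalLeft (fun i : Fin n ↦ a i) +
      ((3 : ℝ) ^ n)⁻¹ * cantorMap (fun i ↦ a (i + n)) := by
  rw [cantorMap, Real.ofDigits_eq_sum_add_ofDigits _ n, cantorIntervalLeft,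
    ← Fin.sum_univ_eq_sum_range]
  congr 1
  refine Finset.sum_congr rfl fun i _ ↦ ?_
  cases h : a i <;> simp [h, Real.ofDigitsTerm, div_eq_mul_inv]

lemma cantorMap_mem_Icc (a : ℕ → Bool) (n : ℕ) :
    cantorMap a ∈ Icc (cantorIntervalLeft (fun i : Fin n ↦ a i))
      (cantorIntervalLeft (fun i : Fin n ↦ a i) + ((3 : ℝ) ^ n)⁻¹) := by
  have h₀ := cantorMap_nonneg (fun i ↦ a (i + n))
  have h₁ := cantorMap_le_one (fun i ↦ a (i + n))
  have hp : (0 : ℝ) < ((3 : ℝ) ^ n)⁻¹ := by positivity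
  rw [cantorMap_eq_cantorIntervalLeft_add a n]
  constructor <;> nlinarith

lemma cantorMap_eq_head_add_tail (a : ℕ → Bool) :
    cantorMap a = cond (a 0) 2 0 / 3 + 3⁻¹ * cantorMap (fun i ↦ a (i + 1)) := by
  simp [cantorMap_eq_cantorIntervalLeft_add a 1, cantorIntervalLeft]

lemma abs_cantorMap_sub_le {n : ℕ} {a b : ℕ → Bool} (h : ∀ i < n, a i = b i) :
    |cantorMap a - cantorMap b| ≤ ((3 : ℝ) ^ n)⁻¹ := by
  have := Real.abs_ofDigits_sub_ofDigits_le (b := 3) (n := n)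
    (x := fun i ↦ cond (a i) (2 : Fin 3) 0) (y := fun i ↦ cond (b i) (2 : Fin 3) 0)
    fun i hi ↦ by rw [h i hi]
  simpa [cantorMap] using this

lemma inv_three_pow_le_abs_cantorMap_sub {n : ℕ} {a b : ℕ → Bool}
    (h : ∃ i < n, a i ≠ b i) :
    ((3 : ℝ) ^ n)⁻¹ ≤ |cantorMap a - cantorMap b| := by
  induction n generalizing a b with
  | zero => obtain ⟨i, hi, -⟩ := h; omega
  | succ n ih =>
    rw [cantorMap_eq_head_add_tail a, cantorMap_eq_head_add_tail b, pow_succ, mul_inv]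
    by_cases h0 : a 0 = b 0
    · obtain ⟨i, hi, hne⟩ := h
      obtain ⟨j, rfl⟩ : ∃ j, i = j + 1 :=
        Nat.exists_eq_succ_of_ne_zero (by rintro rfl; exact hne h0)
      have := ih (a := fun i ↦ a (i + 1)) (b := fun i ↦ b (i + 1)) ⟨j, by omega, hne⟩
      rw [h0, add_sub_add_left_eq_sub, ← mul_sub, abs_mul,
        abs_of_pos (by norm_num : (0 : ℝ) < 3⁻¹)]
      nlinarith
    · -- the leading digits contribute `± 2/3`, the tails at most `1/3`
      have ha₀ := cantorMap_nonneg (fun i ↦ a (i + 1))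
      have ha₁ := cantorMap_le_one (fun i ↦ a (i + 1))
      have hb₀ := cantorMap_nonneg (fun i ↦ b (i + 1))
      have hb₁ := cantorMap_le_one (fun i ↦ b (i + 1))
      have hp : ((3 : ℝ) ^ n)⁻¹ ≤ 1 := inv_le_one_of_one_le₀ (one_le_pow₀ (by norm_num))
      obtain ⟨ha, hb⟩ | ⟨ha, hb⟩ :
          a 0 = false ∧ b 0 = true ∨ a 0 = true ∧ b 0 = false := by
        revert h0; cases a 0 <;> cases b 0 <;> simp
      · rw [ha, hb, cond_false, cond_true]
        exact le_trans (by nlinarith) (neg_le_abs _)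
      · rw [ha, hb, cond_false, cond_true]
        exact le_trans (by nlinarith) (le_abs_self _)

lemma exists_nat_cantorIntervalLeft_eq {n : ℕ} (v : Fin n → Bool) :
    ∃ b : ℕ, cantorIntervalLeft v = b / 3 ^ n := by
  refine ⟨∑ i : Fin n, cond (v i) 2 0 * 3 ^ (n - (i + 1)), ?_⟩
  rw [cantorIntervalLeft, eq_div_iff (by positivity), Finset.sum_mul, Nat.cast_sum]
  refine Finset.sum_congr rfl fun i _ ↦ ?_
  rw [Nat.cast_mul, Nat.cast_pow, pow_sub₀ _ (by norm_num) (by omega : (i : ℕ) + 1 ≤ n)]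
  cases v i <;> simp only [cond_true, cond_false] <;> push_cast <;> ring

lemma mem_cantorEndpoints {L b : ℕ} {x : ℝ} (hx : x ∈ cantorSet) (hb : x = b / 3 ^ L) :
    x ∈ cantorEndpoints L := by
  refine ⟨⟨b, ?_, hb⟩, hx⟩
  have := (cantorSet_subset_unitInterval hx).2
  rw [hb, div_le_one (by positivity)] at this
  exact_mod_cast this

lemma cantorIntervalLeft_mem_cantorEndpoints {n : ℕ} (v : Fin n → Bool) :
    cantorIntervalLeft v ∈ cantorEndpoints n ∧
      cantorIntervalLeft v + ((3 : ℝ) ^ n)⁻¹ ∈ cantorEndpoints n := by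
  obtain ⟨b, hb⟩ := exists_nat_cantorIntervalLeft_eq v
  have hext (t : Bool) :
      cantorIntervalLeft v + ((3 : ℝ) ^ n)⁻¹ * cond t 1 0 ∈ cantorSet := by
    have := cantorMap_mem_cantorSet fun i ↦ if h : i < n then v ⟨i, h⟩ else t
    rw [cantorMap_eq_cantorIntervalLeft_add _ n] at this
    simpa [cantorMap_const] using this
  constructor
  · exact mem_cantorEndpoints (by simpa using hext false) hb
  · refine mem_cantorEndpoints (b := b + 1) (by simpa using hext true) ?_
    rw [hb]; push_cast; ring

lemma cantorEndpoints_finite (L : ℕ) : (cantorEndpoints L).Finite :=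
  ((finite_Iic (3 ^ L)).image fun b : ℕ ↦ (b : ℝ) / 3 ^ L).subset
    fun _ ⟨⟨b, hb, hx⟩, _⟩ ↦ ⟨b, hb, hx.symm⟩

lemma inv_three_pow_le_abs_sub_of_mem_cantorEndpoints {L : ℕ} {x y : ℝ}
    (hx : x ∈ cantorEndpoints L) (hy : y ∈ cantorEndpoints L) (hxy : x ≠ y) :
    ((3 : ℝ) ^ L)⁻¹ ≤ |x - y| := by
  obtain ⟨⟨b, -, rfl⟩, -⟩ := hx
  obtain ⟨⟨c, -, rfl⟩, -⟩ := hy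
  have hbc : (b : ℤ) - c ≠ 0 := sub_ne_zero.mpr fun h ↦ hxy (by rw [Int.ofNat_inj.mp h])
  have h1 : (1 : ℝ) ≤ |(b : ℝ) - c| := by exact_mod_cast Int.one_le_abs hbc
  rw [← sub_div, abs_div, abs_of_pos (by positivity : (0 : ℝ) < 3 ^ L),
    le_div_iff₀ (by positivity), inv_mul_cancel₀ (by positivity)]
  exact h1

lemma exists_mem_cantorEndpoints_abs_sub_le {z : ℝ} (hz : z ∈ cantorSet) (L : ℕ) :
    ∃ e ∈ cantorEndpoints L, |e - z| ≤ ((3 : ℝ) ^ L)⁻¹ / 2 := by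
  obtain ⟨a, rfl⟩ := exists_cantorMap_eq hz
  obtain ⟨h₁, h₂⟩ := cantorMap_mem_Icc a L
  obtain ⟨he₁, he₂⟩ := cantorIntervalLeft_mem_cantorEndpoints (fun i : Fin L ↦ a i)
  rcases le_or_gt (cantorMap a)
    (cantorIntervalLeft (fun i : Fin L ↦ a i) + ((3 : ℝ) ^ L)⁻¹ / 2) with h | h
  · exact ⟨_, he₁, abs_le.mpr ⟨by linarith, by linarith⟩⟩
  · exact ⟨_, he₂, abs_le.mpr ⟨by linarith, by linarith⟩⟩

lemma ncard_cantorEndpoints_inter_le_one {L : ℕ} {s : Set ℝ}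
    (hs : ∀ x ∈ s, ∀ y ∈ s, |x - y| < ((3 : ℝ) ^ L)⁻¹) :
    (cantorEndpoints L ∩ s).ncard ≤ 1 := by
  have := ((cantorEndpoints_finite L).subset (inter_subset_left (t := s))).to_subtype
  exact ncard_le_one_iff_subsingleton.mpr fun x hx y hy ↦ by_contra fun hxy ↦
    (hs x hx.2 y hy.2).not_ge (inv_three_pow_le_abs_sub_of_mem_cantorEndpoints hx.1 hy.1 hxy)

lemma ncard_cantorEndpoints_inter_ball_le (L : ℕ) (z : ℝ) {R R' : ℝ}
    (h : R' ≤ R + ((3 : ℝ) ^ L)⁻¹) :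
    (cantorEndpoints L ∩ ball z R').ncard ≤ (cantorEndpoints L ∩ ball z R).ncard + 2 := by
  set C := cantorEndpoints L
  have hfin (s : Set ℝ) : (C ∩ s).Finite := (cantorEndpoints_finite L).subset inter_subset_left
  have hsub : (C ∩ ball z R') \ (C ∩ ball z R) ⊆
      (C ∩ Ico (z + R) (z + R')) ∪ (C ∩ Ioc (z - R') (z - R)) := by
    rintro x ⟨⟨hxC, hx'⟩, hx⟩
    have hxR : R ≤ |x - z| := by
      by_contra! hlt; exact hx ⟨hxC, by rwa [mem_ball, Real.dist_eq]⟩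
    rw [mem_ball, Real.dist_eq] at hx'
    rcases le_or_gt z x with hzx | hzx
    · rw [abs_of_nonneg (by linarith)] at hxR hx'
      exact Or.inl ⟨hxC, by linarith, by linarith⟩
    · rw [abs_of_neg (by linarith)] at hxR hx'
      exact Or.inr ⟨hxC, by linarith, by linarith⟩
  have hwindow₁ : (C ∩ Ico (z + R) (z + R')).ncard ≤ 1 :=
    ncard_cantorEndpoints_inter_le_one fun x hx y hy ↦
      abs_sub_lt_iff.mpr ⟨by linarith [hx.2, hy.1], by linarith [hy.2, hx.1]⟩
  have hwindow₂ : (C ∩ Ioc (z - R') (z - R)).ncard ≤ 1 :=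
    ncard_cantorEndpoints_inter_le_one fun x hx y hy ↦
      abs_sub_lt_iff.mpr ⟨by linarith [hx.2, hy.1], by linarith [hy.2, hx.1]⟩
  calc (C ∩ ball z R').ncard
      ≤ ((C ∩ ball z R') \ (C ∩ ball z R)).ncard + (C ∩ ball z R).ncard :=
        ncard_le_ncard_sdiff_add_ncard _ _ (hfin _)
    _ ≤ (C ∩ Ico (z + R) (z + R')).ncard + (C ∩ Ioc (z - R') (z - R)).ncard
          + (C ∩ ball z R).ncard := by
        gcongr
        exact (ncard_le_ncard hsub ((hfin _).union (hfin _))).trans (ncard_union_le _ _)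
    _ ≤ (C ∩ ball z R).ncard + 2 := by omega

lemma cantorDim_pos : 0 < cantorDim :=
  div_pos (Real.log_pos (by norm_num)) (Real.log_pos (by norm_num))

lemma three_rpow_cantorDim : (3 : ℝ) ^ cantorDim = 2 := by
  rw [Real.rpow_def_of_pos (by norm_num), cantorDim,
    mul_div_cancel₀ _ (Real.log_pos (by norm_num)).ne', Real.exp_log (by norm_num)]

lemma ofReal_inv_three_pow_rpow_cantorDim (n : ℕ) :
    ENNReal.ofReal ((3 : ℝ) ^ n)⁻¹ ^ cantorDim = 2⁻¹ ^ n := by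
  rw [ENNReal.ofReal_rpow_of_nonneg (by positivity) cantorDim_pos.le,
    Real.inv_rpow (by positivity), ← Real.rpow_natCast, ← Real.rpow_mul (by norm_num), mul_comm,
    Real.rpow_mul (by norm_num), three_rpow_cantorDim, Real.rpow_natCast,
    ENNReal.ofReal_inv_of_pos (by positivity), ENNReal.ofReal_pow (by norm_num), ENNReal.inv_pow]
  norm_num

lemma hausdorffMeasure_cantorSet_le_one : μH[cantorDim] cantorSet ≤ 1 := by
  have hcov (M : ℕ) :
      cantorSet ⊆ ⋃ v : Fin M → Bool,
        Icc (cantorIntervalLeft v) (cantorIntervalLeft v + ((3 : ℝ) ^ M)⁻¹) := by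
    intro x hx
    obtain ⟨a, rfl⟩ := exists_cantorMap_eq hx
    exact mem_iUnion.mpr ⟨fun i ↦ a i, cantorMap_mem_Icc a M⟩
  have hr : Tendsto (fun M : ℕ ↦ ENNReal.ofReal ((3 : ℝ) ^ M)⁻¹) atTop (nhds 0) := by
    simpa using ENNReal.tendsto_ofReal (tendsto_inv_atTop_zero.comp
      (tendsto_pow_atTop_atTop_of_one_lt (by norm_num : (1 : ℝ) < 3)))
  refine (Measure.hausdorffMeasure_le_liminf_sum _ _ _ hr _
    (Eventually.of_forall fun M v ↦ by simp) (Eventually.of_forall hcov)).trans ?_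
  simp only [Real.ediam_Icc, add_sub_cancel_left, ofReal_inv_three_pow_rpow_cantorDim,
    Finset.sum_const, Finset.card_univ, Fintype.card_fun, Fintype.card_bool, Fintype.card_fin,
    nsmul_eq_mul, Nat.cast_pow, Nat.cast_ofNat, ← mul_pow,
    ENNReal.mul_inv_cancel two_ne_zero ENNReal.ofNat_ne_top, one_pow, liminf_const, le_refl]

lemma hausdorffMeasure_affine_image_cantorSet_le (e : ℝ) (n : ℕ) :
    μH[cantorDim] ((fun x ↦ e + ((3 : ℝ) ^ n)⁻¹ * x) '' cantorSet) ≤ 2⁻¹ ^ n := by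
  have hf :
      LipschitzWith (Real.toNNReal ((3 : ℝ) ^ n)⁻¹) fun x ↦ e + ((3 : ℝ) ^ n)⁻¹ * x :=
    LipschitzWith.of_dist_le_mul fun x y ↦ by
      rw [Real.coe_toNNReal _ (by positivity), Real.dist_eq, Real.dist_eq,
        add_sub_add_left_eq_sub, ← mul_sub, abs_mul, abs_of_pos (by positivity)]
  calc _ ≤ ENNReal.ofReal ((3 : ℝ) ^ n)⁻¹ ^ cantorDim * μH[cantorDim] cantorSet :=
        hf.hausdorffMeasure_image_le cantorDim_pos.le _
    _ ≤ 2⁻¹ ^ n * 1 := by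
        rw [ofReal_inv_three_pow_rpow_cantorDim]
        gcongr
        exact hausdorffMeasure_cantorSet_le_one
    _ = 2⁻¹ ^ n := mul_one _

lemma cantorMeasure_ball_le (z r : ℝ) (L : ℕ) :
    cantorMeasure (ball z r) ≤
      (cantorEndpoints L ∩ ball z (r + ((3 : ℝ) ^ L)⁻¹)).ncard * 2⁻¹ ^ L := by
  have hfin := (cantorEndpoints_finite L).subset
    (inter_subset_left (t := ball z (r + ((3 : ℝ) ^ L)⁻¹)))
  have hcov : ball z r ∩ cantorSet ⊆
      ⋃ e ∈ hfin.toFinset, (fun x ↦ e + ((3 : ℝ) ^ L)⁻¹ * x) '' cantorSet := by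
    rintro x ⟨hxB, hx⟩
    obtain ⟨a, rfl⟩ := exists_cantorMap_eq hx
    obtain ⟨h₁, h₂⟩ := cantorMap_mem_Icc a L
    refine mem_iUnion₂.mpr ⟨cantorIntervalLeft (fun i : Fin L ↦ a i), ?_, _,
      cantorMap_mem_cantorSet (fun i ↦ a (i + L)),
      (cantorMap_eq_cantorIntervalLeft_add a L).symm⟩
    rw [Finite.mem_toFinset, mem_inter_iff, mem_ball, Real.dist_eq]
    rw [mem_ball, Real.dist_eq] at hxB
    refine ⟨(cantorIntervalLeft_mem_cantorEndpoints _).1, abs_lt.mpr ⟨?_, ?_⟩⟩ <;>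
      linarith [abs_lt.mp hxB]
  rw [cantorMeasure, Measure.restrict_apply measurableSet_ball, ncard_eq_toFinset_card _ hfin]
  calc _ ≤ ∑ e ∈ hfin.toFinset,
        μH[cantorDim] ((fun x ↦ e + ((3 : ℝ) ^ L)⁻¹ * x) '' cantorSet) :=
        (measure_mono hcov).trans (measure_biUnion_finset_le _ _)
    _ ≤ ∑ e ∈ hfin.toFinset, (2⁻¹ : ℝ≥0∞) ^ L :=
        Finset.sum_le_sum fun e _ ↦ hausdorffMeasure_affine_image_cantorSet_le e L
    _ = _ := by rw [Finset.sum_const, nsmul_eq_mul]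

noncomputable def coinTossing : Measure (ℕ → Bool) :=
  Measure.infinitePi fun _ ↦ uniformOn univ

lemma coinTossing_cylinder (a : ℕ → Bool) (n : ℕ) :
    coinTossing {b | ∀ i < n, b i = a i} = 2⁻¹ ^ n := by
  have : {b : ℕ → Bool | ∀ i < n, b i = a i} =
      (Finset.range n : Set ℕ).pi fun i ↦ {a i} := by
    ext; simp
  rw [this, coinTossing, Measure.infinitePi_pi (μ := fun _ ↦ uniformOn univ)
    fun _ _ ↦ measurableSet_singleton _]
  simp only [uniformOn_univ]
  simp

noncomputable def cantorDistribution : Measure ℝ := coinTossing.map cantorMap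

lemma cantorDistribution_le_of_ediam_lt {s : Set ℝ} {n : ℕ}
    (hs : ediam s < ENNReal.ofReal ((3 : ℝ) ^ n)⁻¹) : cantorDistribution s ≤ 2⁻¹ ^ n := by
  -- the closure is measurable and has the same diameter
  calc cantorDistribution s ≤ cantorDistribution (closure s) := measure_mono subset_closure
    _ = coinTossing (cantorMap ⁻¹' closure s) :=
        Measure.map_apply continuous_cantorMap.measurable isClosed_closure.measurableSet
    _ ≤ 2⁻¹ ^ n := ?_
  rcases (cantorMap ⁻¹' closure s).eq_empty_or_nonempty with h | ⟨a, ha⟩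
  · simp [h]
  rw [← coinTossing_cylinder a n]
  refine measure_mono fun b hb ↦ ?_
  change ∀ i < n, b i = a i
  by_contra! hne
  have hd : edist (cantorMap b) (cantorMap a) < ENNReal.ofReal ((3 : ℝ) ^ n)⁻¹ :=
    (edist_le_ediam_of_mem (s := closure s) hb ha).trans_lt (by rwa [ediam_closure])
  rw [edist_dist, ENNReal.ofReal_lt_ofReal_iff (by positivity), Real.dist_eq] at hd
  exact hd.not_ge (inv_three_pow_le_abs_cantorMap_sub hne)

lemma inv_two_pow_le_cantorDistribution_ball {x : ℝ} (hx : x ∈ cantorSet) (n : ℕ) :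
    2⁻¹ ^ (n + 1) ≤ cantorDistribution (ball x (((3 : ℝ) ^ n)⁻¹ / 2)) := by
  obtain ⟨a, rfl⟩ := exists_cantorMap_eq hx
  rw [← coinTossing_cylinder a (n + 1), cantorDistribution,
    Measure.map_apply continuous_cantorMap.measurable measurableSet_ball]
  refine measure_mono fun b hb ↦ ?_
  rw [mem_preimage, mem_ball, Real.dist_eq]
  calc |cantorMap b - cantorMap a| ≤ ((3 : ℝ) ^ (n + 1))⁻¹ := abs_cantorMap_sub_le hb
    _ < ((3 : ℝ) ^ n)⁻¹ / 2 := by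
        rw [pow_succ, mul_inv]
        have : (0 : ℝ) < ((3 : ℝ) ^ n)⁻¹ := by positivity
        linarith

lemma exists_inv_three_pow_mem_Ico {d : ℝ} (h₀ : 0 < d) (h₁ : d < 1) :
    ∃ n : ℕ, ((3 : ℝ) ^ (n + 1))⁻¹ ≤ d ∧ d < ((3 : ℝ) ^ n)⁻¹ := by
  classical
  have hP : ∃ n : ℕ, ((3 : ℝ) ^ n)⁻¹ ≤ d := by
    obtain ⟨n, hn⟩ := exists_pow_lt_of_lt_one h₀ (by norm_num : (3 : ℝ)⁻¹ < 1)
    exact ⟨n, by rw [← inv_pow]; exact hn.le⟩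
  obtain ⟨n, hn⟩ : ∃ n, Nat.find hP = n + 1 :=
    Nat.exists_eq_succ_of_ne_zero fun h ↦ by simpa [h] using (Nat.find_spec hP).trans_lt h₁
  exact ⟨n, hn ▸ Nat.find_spec hP, not_le.mp (Nat.find_min hP (by omega))⟩

lemma cantorDistribution_le_hausdorffMeasure :
    (2 : ℝ≥0∞)⁻¹ • cantorDistribution ≤ μH[cantorDim] := by
  refine Measure.le_hausdorffMeasure _ _ 2⁻¹ (by norm_num) fun s hs ↦ ?_
  rw [Measure.smul_apply, smul_eq_mul]
  rcases eq_or_ne (ediam s) 0 with h0 | h0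
  · have : cantorDistribution s = 0 :=
      le_antisymm (ge_of_tendsto' (ENNReal.tendsto_pow_atTop_nhds_zero_of_lt_one (by norm_num))
        fun n ↦ cantorDistribution_le_of_ediam_lt (by rw [h0]; positivity)) zero_le
    simp [this]
  obtain ⟨d, hd₀, hd₁, hd⟩ :
      ∃ d : ℝ, 0 < d ∧ d < 1 ∧ ediam s = ENNReal.ofReal d := by
    have hne : ediam s ≠ ⊤ := ne_top_of_le_ne_top (by norm_num) hs
    refine ⟨(ediam s).toReal, ENNReal.toReal_pos h0 hne, ?_, (ENNReal.ofReal_toReal hne).symm⟩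
    refine (ENNReal.toReal_le_of_le_ofReal (b := 2⁻¹) (by norm_num) (hs.trans ?_)).trans_lt
      (by norm_num)
    rw [ENNReal.ofReal_inv_of_pos two_pos, ENNReal.ofReal_ofNat]
  obtain ⟨n, hn, hn'⟩ := exists_inv_three_pow_mem_Ico hd₀ hd₁
  calc 2⁻¹ * cantorDistribution s ≤ 2⁻¹ * 2⁻¹ ^ n := by
        gcongr
        exact cantorDistribution_le_of_ediam_lt
          (by rwa [hd, ENNReal.ofReal_lt_ofReal_iff (by positivity)])
    _ = ENNReal.ofReal ((3 : ℝ) ^ (n + 1))⁻¹ ^ cantorDim := by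
        rw [ofReal_inv_three_pow_rpow_cantorDim, pow_succ']
    _ ≤ ediam s ^ cantorDim := by
        rw [hd]
        exact ENNReal.rpow_le_rpow (ENNReal.ofReal_le_ofReal hn) cantorDim_pos.le

lemma cantorDistribution_le_two_smul_cantorMeasure :
    cantorDistribution ≤ (2 : ℝ≥0∞) • cantorMeasure := by
  have hK : cantorDistribution.restrict cantorSet = cantorDistribution :=
    Measure.restrict_eq_self_of_ae_mem <| range_cantorMap ▸
      ae_map_mem_range _ (range_cantorMap ▸ isClosed_cantorSet.measurableSet) _
  have h2 : cantorDistribution ≤ (2 : ℝ≥0∞) • μH[cantorDim] := by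
    rw [Measure.le_iff']
    intro s
    have := Measure.le_iff'.mp cantorDistribution_le_hausdorffMeasure s
    rw [Measure.smul_apply, smul_eq_mul] at this ⊢
    rwa [← ENNReal.inv_mul_le_iff two_ne_zero ENNReal.ofNat_ne_top]
  rw [← hK, cantorMeasure, ← Measure.restrict_smul]
  exact Measure.restrict_mono subset_rfl h2

lemma inv_two_pow_le_cantorMeasure_ball {x : ℝ} (hx : x ∈ cantorSet) (n : ℕ) :
    2⁻¹ ^ (n + 2) ≤ cantorMeasure (ball x (((3 : ℝ) ^ n)⁻¹ / 2)) := by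
  have := (inv_two_pow_le_cantorDistribution_ball hx n).trans
    (Measure.le_iff'.mp cantorDistribution_le_two_smul_cantorMeasure _)
  rw [Measure.smul_apply, smul_eq_mul,
    ← ENNReal.inv_mul_le_iff two_ne_zero ENNReal.ofNat_ne_top, ← pow_succ'] at this
  exact this

lemma ncard_mul_le_cantorMeasure_ball (z r : ℝ) (L : ℕ) :
    (cantorEndpoints L ∩ ball z (r - ((3 : ℝ) ^ L)⁻¹ / 2)).ncard * 2⁻¹ ^ (L + 2) ≤
      cantorMeasure (ball z r) := by
  set δ := ((3 : ℝ) ^ L)⁻¹ / 2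
  have hfin := (cantorEndpoints_finite L).subset (inter_subset_left (t := ball z (r - δ)))
  have hdisj : (hfin.toFinset : Set ℝ).PairwiseDisjoint fun x ↦ ball x δ := by
    intro x hx y hy hxy
    rw [Finite.coe_toFinset] at hx hy
    refine ball_disjoint_ball ?_
    rw [Real.dist_eq, add_halves]
    exact inv_three_pow_le_abs_sub_of_mem_cantorEndpoints hx.1 hy.1 hxy
  rw [ncard_eq_toFinset_card _ hfin, ← nsmul_eq_mul, ← Finset.sum_const]
  calc ∑ _ ∈ hfin.toFinset, (2⁻¹ : ℝ≥0∞) ^ (L + 2)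
      ≤ ∑ x ∈ hfin.toFinset, cantorMeasure (ball x δ) :=
        Finset.sum_le_sum fun x hx ↦
          inv_two_pow_le_cantorMeasure_ball (hfin.mem_toFinset.mp hx).1.2 L
    _ = cantorMeasure (⋃ x ∈ hfin.toFinset, ball x δ) :=
        (measure_biUnion_finset hdisj fun _ _ ↦ measurableSet_ball).symm
    _ ≤ cantorMeasure (ball z r) := by
        refine measure_mono (iUnion₂_subset fun x hx ↦ ball_subset_ball' ?_)
        have := (hfin.mem_toFinset.mp hx).2
        rw [mem_ball] at this
        linarith

lemma one_le_ncard_cantorEndpoints_inter_ball {z R : ℝ} (hz : z ∈ cantorSet) (L : ℕ)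
    (hR : ((3 : ℝ) ^ L)⁻¹ / 2 < R) : 1 ≤ (cantorEndpoints L ∩ ball z R).ncard := by
  obtain ⟨e, he, hez⟩ := exists_mem_cantorEndpoints_abs_sub_le hz L
  refine (ncard_pos ((cantorEndpoints_finite L).subset inter_subset_left)).mpr ⟨e, he, ?_⟩
  rw [mem_ball, Real.dist_eq]
  exact hez.trans_lt hR

lemma natCast_mul_inv_two_pow (N L : ℕ) :
    (N : ℝ≥0∞) * 2⁻¹ ^ L = ENNReal.ofReal (N / 2 ^ L) := by
  rw [div_eq_mul_inv, ENNReal.ofReal_mul (by positivity), ENNReal.ofReal_natCast, ← inv_pow,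
    ENNReal.ofReal_pow (by norm_num), ENNReal.ofReal_inv_of_pos two_pos, ENNReal.ofReal_ofNat]

lemma cantorMeasure_ball_le_ofReal {z r : ℝ} (hz : z ∈ cantorSet) {L : ℕ}
    (hr : ((3 : ℝ) ^ L)⁻¹ / 2 < r) :
    cantorMeasure (ball z r) ≤
      ENNReal.ofReal (3 * ((cantorEndpoints L ∩ ball z r).ncard / 2 ^ L)) := by
  have h₁ := one_le_ncard_cantorEndpoints_inter_ball hz L hr
  have h₂ := ncard_cantorEndpoints_inter_ball_le L z (R := r) le_rfl
  have h₃ : (cantorEndpoints L ∩ ball z (r + ((3 : ℝ) ^ L)⁻¹)).ncard ≤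
      3 * (cantorEndpoints L ∩ ball z r).ncard := by omega
  refine (cantorMeasure_ball_le z r L).trans ?_
  rw [ENNReal.ofReal_mul (by norm_num), ENNReal.ofReal_ofNat, ← natCast_mul_inv_two_pow,
    ← mul_assoc]
  gcongr
  exact (Nat.cast_le.mpr h₃).trans_eq (by push_cast; rfl)

lemma ofReal_le_cantorMeasure_ball {z r : ℝ} (hz : z ∈ cantorSet) {L : ℕ}
    (hr : ((3 : ℝ) ^ L)⁻¹ < r) :
    ENNReal.ofReal (1 / 12 * ((cantorEndpoints L ∩ ball z r).ncard / 2 ^ L)) ≤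
      cantorMeasure (ball z r) := by
  set δ := ((3 : ℝ) ^ L)⁻¹ / 2 with hδ
  have hp : (0 : ℝ) < ((3 : ℝ) ^ L)⁻¹ := by positivity
  have h₁ := one_le_ncard_cantorEndpoints_inter_ball hz L (R := r - δ) (by linarith)
  have h₂ := ncard_cantorEndpoints_inter_ball_le L z (R := r - δ) (R' := r) (by linarith)
  have h₃ : (12 : ℝ≥0∞) * 2⁻¹ ^ 2 = 3 := by
    rw [← ENNReal.inv_pow, show (12 : ℝ≥0∞) = 3 * 2 ^ 2 by norm_num, mul_assoc,
      ENNReal.mul_inv_cancel (by positivity) (by simp), mul_one]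
  rw [ENNReal.ofReal_mul (by norm_num), ← natCast_mul_inv_two_pow, one_div,
    ENNReal.ofReal_inv_of_pos (by norm_num), ENNReal.ofReal_ofNat,
    ENNReal.inv_mul_le_iff (by norm_num) (by norm_num)]
  calc ((cantorEndpoints L ∩ ball z r).ncard : ℝ≥0∞) * 2⁻¹ ^ L
      ≤ (3 * (cantorEndpoints L ∩ ball z (r - δ)).ncard : ℕ) * 2⁻¹ ^ L := by
        gcongr
        omega
    _ = 12 * ((cantorEndpoints L ∩ ball z (r - δ)).ncard * 2⁻¹ ^ (L + 2)) := by
        rw [pow_add, Nat.cast_mul, Nat.cast_ofNat, ← h₃]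
        ring
    _ ≤ 12 * cantorMeasure (ball z r) := by
        gcongr
        exact ncard_mul_le_cantorMeasure_ball z r L

lemma cantorMeasure_ball_le_ofReal_five_mul (z : ℝ) {r : ℝ} {L : ℕ}
    (hr : ((3 : ℝ) ^ L)⁻¹ ≤ 4 * r) :
    cantorMeasure (ball z r) ≤
      ENNReal.ofReal (2 * ((cantorEndpoints L ∩ ball z (5 * r)).ncard / 2 ^ L)) := by
  refine (cantorMeasure_ball_le z r L).trans ?_
  rw [ENNReal.ofReal_mul (by norm_num), ENNReal.ofReal_ofNat, ← natCast_mul_inv_two_pow]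
  refine le_trans ?_ (le_mul_of_one_le_left' one_le_two)
  gcongr
  · exact (cantorEndpoints_finite L).subset inter_subset_left
  · linarith

/-- For `I = B(z,r)` with `z ∈ K`, `0 < r < 1` and `L ≥ L₀` with `3^{-L₀}/2 < r/5`, one has
`μ(I) ≍ |C_L ∩ I| / 2^L` with absolute constants; moreover, for any ball `B = B(z,r)`
(`z ∈ ℝ`, `0 < r < 1`) and any positive integer `L` with `3^{1-L} < r`,
`μ(B) ≤ 2^{-(L-1)} |C_L ∩ 5B|`. -/
theorem measure_of_interval :
    (∃ c₁ c₂ : ℝ, 0 < c₁ ∧ 0 < c₂ ∧ ∀ (z r : ℝ) (L₀ L : ℕ),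
      z ∈ cantorSet → 0 < r → r < 1 → 0 < L₀ → L₀ ≤ L →
      (3:ℝ) ^ (-(L₀:ℝ)) / 2 < r / 5 →
      c₁ * (((cantorEndpoints L ∩ ball z r).ncard : ℝ) / 2 ^ L) ≤
          (cantorMeasure (ball z r)).toReal ∧
        (cantorMeasure (ball z r)).toReal ≤
          c₂ * (((cantorEndpoints L ∩ ball z r).ncard : ℝ) / 2 ^ L)) ∧
    (∀ (z r : ℝ) (L : ℕ), 0 < r → r < 1 → 0 < L → (3:ℝ) ^ (1 - (L:ℝ)) < r →
      (cantorMeasure (ball z r)).toReal ≤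
        (2:ℝ) ^ (-((L:ℝ) - 1)) * ((cantorEndpoints L ∩ ball z (5 * r)).ncard : ℝ)) := by
  refine ⟨⟨1 / 12, 3, by norm_num, by norm_num, fun z r L₀ L hz _ _ _ hL₀L hrL ↦ ?_⟩,
    fun z r L hr _ _ hrL ↦ ?_⟩
  · have hr : ((3 : ℝ) ^ L)⁻¹ < r := by
      rw [Real.rpow_neg (by norm_num), Real.rpow_natCast] at hrL
      have : ((3 : ℝ) ^ L)⁻¹ ≤ ((3 : ℝ) ^ L₀)⁻¹ :=
        inv_anti₀ (by positivity) (pow_le_pow_right₀ (by norm_num) hL₀L)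
      linarith [inv_pos.mpr (by positivity : (0 : ℝ) < 3 ^ L₀)]
    have hup := cantorMeasure_ball_le_ofReal hz ((half_lt_self (by positivity)).trans hr)
    exact ⟨(ENNReal.ofReal_le_iff_le_toReal (ne_top_of_le_ne_top ENNReal.ofReal_ne_top hup)).mp
      (ofReal_le_cantorMeasure_ball hz hr), ENNReal.toReal_le_of_le_ofReal (by positivity) hup⟩
  · rw [Real.rpow_sub (by norm_num), Real.rpow_one, Real.rpow_natCast, div_eq_mul_inv] at hrL
    rw [neg_sub, Real.rpow_sub (by norm_num), Real.rpow_one, Real.rpow_natCast]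
    have hp : (0 : ℝ) < ((3 : ℝ) ^ L)⁻¹ := by positivity
    refine ENNReal.toReal_le_of_le_ofReal (by positivity) ?_
    convert cantorMeasure_ball_le_ofReal_five_mul z (r := r) (L := L) (by linarith) using 2
    ring
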